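/- arXiv:2203.00476 — 3 statements merged into one kernel-verified Lean document; each statement's English description precedes it below -/
import Mathlib

section
/- Fix p ∈ [1,∞), k ∈ ℕ, κ > 1, and β ∈ (0,∞). Let Z_1, Z_2, … be i.i.d. with the p-generalized Gaussian distribution N_p and, for each n, let W_n be a random variable on [0,∞) independent of Z^{(n)} = (Z_1,…,Z_n) such that W_n/n^κ → β in probability and such that the family ((W_n/n^κ)^{-2/p})_{n∈ℕ} is uniformly integrable. For V ∈ V_{n,k} let μ_V^{(n)} be the law of Σ_{j=1}^n n^{κ/p} Z_j (‖Z^{(n)}‖_p^p + W_n)^{-1/p} V_{·,j} and let μ̃_V^{(n)} be the law of (1/β)^{1/p} Σ_{j=1}^n Z_j V_{·,j}. Then, for k ≤ n, sup_{V ∈ V_{n,k}} ρ_LP(μ_V^{(n)}, μ̃_V^{(n)}) → 0 as n → ∞. -/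
open MeasureTheory ProbabilityTheory Filter
open scoped ENNReal NNReal

/-- Matrices over `ℝ` carry the product measurable structure. -/
instance matrixMeasurableSpace {m n : Type*} : MeasurableSpace (Matrix m n ℝ) :=
  inferInstanceAs (MeasurableSpace (m → n → ℝ))

noncomputable section

/-- The `ℓ_p`-norm of a vector in `ℝ^n`. -/
def pnorm {n : ℕ} (p : ℝ) (x : Fin n → ℝ) : ℝ := (∑ i, |x i| ^ p) ^ (1 / p)

/-- The `p`-generalized Gaussian distribution `N_p` on `ℝ`. -/
def gaussianP (p : ℝ) : Measure ℝ :=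
  MeasureTheory.volume.withDensity fun x =>
    ENNReal.ofReal ((2 * p ^ (1 / p) * Real.Gamma (1 + 1 / p))⁻¹ * Real.exp (-|x| ^ p / p))

/-- The unit ball of `ℓ_p^n`. -/
def pBall (n : ℕ) (p : ℝ) : Set (Fin n → ℝ) := {x | pnorm p x ≤ 1}

/-- The uniform probability distribution on `B_p^n`. -/
def uniformBall (n : ℕ) (p : ℝ) : Measure (Fin n → ℝ) :=
  (MeasureTheory.volume (pBall n p))⁻¹ • MeasureTheory.volume.restrict (pBall n p)

/-- The cone probability measure on `S_p^{n-1}`, i.e. the pushforward of the uniform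
distribution on the ball under radial projection `x ↦ x / ‖x‖_p`. -/
def coneMeasure (n : ℕ) (p : ℝ) : Measure (Fin n → ℝ) :=
  Measure.map (fun x => (pnorm p x)⁻¹ • x) (uniformBall n p)

/-- The density `ψ_n` of the `p`-radial distribution `P_{n,p,W}`. -/
def psiDens (n : ℕ) (p : ℝ) (W : Measure ℝ) (s : ℝ) : ℝ :=
  (p ^ ((n : ℝ) / p) * Real.Gamma ((n : ℝ) / p + 1))⁻¹ *
    (1 - s ^ p) ^ (-((n : ℝ) / p) - 1) *
    ∫ w in Set.Ioi (0 : ℝ), w ^ ((n : ℝ) / p) * Real.exp (-(1 / p) * (s ^ p / (1 - s ^ p)) * w) ∂W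

/-- The `p`-radial distribution `P_{n,p,W}` on `B_p^n`. -/
def pRadial (n : ℕ) (p : ℝ) (W : Measure ℝ) : Measure (Fin n → ℝ) :=
  W {0} • coneMeasure n p +
    (uniformBall n p).withDensity fun x => ENNReal.ofReal (psiDens n p W (pnorm p x))

/-- The Stiefel manifold of orthonormal `k`-frames in `ℝ^n`, as `k × n` matrices. -/
def Stiefel (n k : ℕ) : Set (Matrix (Fin k) (Fin n) ℝ) := {V | V * V.transpose = 1}

/-- The map sending an `n × n` matrix to its first `k` rows. -/
def firstRows {n k : ℕ} (h : k ≤ n) (U : Matrix (Fin n) (Fin n) ℝ) :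
    Matrix (Fin k) (Fin n) ℝ :=
  Matrix.of fun i j => U (Fin.castLE h i) j

/-- `IsHaar O ν`: `ν` is the (unique) invariant Haar probability measure on the
orthogonal group `O(n)`. -/
def IsHaar {n : ℕ} (ν : Measure (Matrix.orthogonalGroup (Fin n) ℝ)) : Prop :=
  IsProbabilityMeasure ν ∧ ∀ g : Matrix.orthogonalGroup (Fin n) ℝ,
    Measure.map (fun x => g * x) ν = ν

/-- Identification of `Fin k → ℝ` with Euclidean space. -/
def euc {k : ℕ} (x : Fin k → ℝ) : EuclideanSpace ℝ (Fin k) :=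
  (WithLp.equiv 2 (Fin k → ℝ)).symm x

/-- Large deviation principle with speed `n` and rate function `I` for a sequence of
random elements `ξ n` of a topological space. -/
def IsLDP {X : Type*} [TopologicalSpace X] {Ω : Type*} [MeasurableSpace Ω]
    (P : Measure Ω) (ξ : ℕ → Ω → X) (I : X → ℝ≥0∞) : Prop :=
  (∀ F : Set X, IsClosed F →
      Filter.limsup (fun n : ℕ => (((n : ℝ)⁻¹ : ℝ) : EReal) * ENNReal.log (P {ω | ξ n ω ∈ F}))
        Filter.atTop ≤ -(⨅ x ∈ F, (I x : EReal))) ∧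
  (∀ G : Set X, IsOpen G →
      -(⨅ x ∈ G, (I x : EReal)) ≤
        Filter.liminf (fun n : ℕ => (((n : ℝ)⁻¹ : ℝ) : EReal) * ENNReal.log (P {ω | ξ n ω ∈ G}))
          Filter.atTop)

/-- Weak large deviation principle: upper bound only for compact sets. -/
def IsWeakLDP {X : Type*} [TopologicalSpace X] {Ω : Type*} [MeasurableSpace Ω]
    (P : Measure Ω) (ξ : ℕ → Ω → X) (I : X → ℝ≥0∞) : Prop :=
  (∀ F : Set X, IsCompact F →
      Filter.limsup (fun n : ℕ => (((n : ℝ)⁻¹ : ℝ) : EReal) * ENNReal.log (P {ω | ξ n ω ∈ F}))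
        Filter.atTop ≤ -(⨅ x ∈ F, (I x : EReal))) ∧
  (∀ G : Set X, IsOpen G →
      -(⨅ x ∈ G, (I x : EReal)) ≤
        Filter.liminf (fun n : ℕ => (((n : ℝ)⁻¹ : ℝ) : EReal) * ENNReal.log (P {ω | ξ n ω ∈ G}))
          Filter.atTop)

/-- A good rate function: lower semicontinuous with compact sublevel sets. -/
def IsGoodRate {X : Type*} [TopologicalSpace X] (I : X → ℝ≥0∞) : Prop :=
  LowerSemicontinuous I ∧ ∀ c : ℝ≥0∞, c ≠ ⊤ → IsCompact {x | I x ≤ c}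

/-- The standard Gaussian distribution on `ℝ^k` (Euclidean space). -/
def stdGaussian (k : ℕ) : Measure (EuclideanSpace ℝ (Fin k)) :=
  Measure.map euc (Measure.pi fun _ : Fin k => gaussianReal 0 1)

/-- The `k × k` matrix `A Aᵀ` of a `k × ∞` matrix `A`, given by its columns. -/
def grammian {k : ℕ} (A : ℕ → EuclideanSpace ℝ (Fin k)) : Matrix (Fin k) (Fin k) ℝ :=
  Matrix.of fun i l => ∑' j, A j i * A j l

/-- Square-summability of the rows of a `k × ∞` matrix, given by its columns. -/
def SqSummableRows {k : ℕ} (A : ℕ → EuclideanSpace ℝ (Fin k)) : Prop :=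
  ∀ i : Fin k, Summable fun j => A j i * A j i

/-- `RepLaw μ₁ c σ A S ν` says that `ν` is the distribution of
`c • ∑_j Z_j A_{·,j} + σ • S N_k`, where `Z_1, Z_2, …` are i.i.d. with distribution `μ₁`
and `N_k` is an independent standard Gaussian vector in `ℝ^k`. -/
def RepLaw {k : ℕ} (μ₁ : Measure ℝ) (c σ : ℝ) (A : ℕ → EuclideanSpace ℝ (Fin k))
    (S : Matrix (Fin k) (Fin k) ℝ) (ν : Measure (EuclideanSpace ℝ (Fin k))) : Prop :=
  ∃ (Ω : Type) (_ : MeasurableSpace Ω) (P : Measure Ω) (Z : ℕ → Ω → ℝ)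
    (N : Ω → EuclideanSpace ℝ (Fin k)),
      IsProbabilityMeasure P ∧ (∀ j, Measurable (Z j)) ∧ Measurable N ∧
      (∀ j, Measure.map (Z j) P = μ₁) ∧ Measure.map N P = stdGaussian k ∧
      iIndepFun (m := fun o : Option ℕ => Option.rec (motive := fun o =>
          MeasurableSpace (Option.rec (motive := fun _ => Type)
            (EuclideanSpace ℝ (Fin k)) (fun _ => ℝ) o))
          inferInstance (fun _ => inferInstance) o)
        (fun o : Option ℕ => Option.rec (motive := fun o =>
          Ω → Option.rec (motive := fun _ => Type) (EuclideanSpace ℝ (Fin k)) (fun _ => ℝ) o)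
          N (fun j => Z j) o) P ∧
      ν = Measure.map
        (fun ω => c • (∑' j, Z j ω • A j) +
          σ • (Matrix.toEuclideanCLM (𝕜 := ℝ) S) (N ω)) P

/-- The rate function value `-(1/2) log det(I_k - A Aᵀ)`. -/
def rateVal {k : ℕ} (A : ℕ → EuclideanSpace ℝ (Fin k)) : ℝ≥0∞ :=
  ENNReal.ofReal (-(1 / 2) * Real.log ((1 - grammian A).det))

/-- Uniform integrability of a family of nonnegative random variables, in the classical
probabilistic sense: `sup_n E[|ξ_n| 1_{|ξ_n| > K}] → 0` as `K → ∞`. -/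
def UIFamily {Ω : Type*} [MeasurableSpace Ω] (P : Measure Ω) (ξ : ℕ → Ω → ℝ) : Prop :=
  Filter.Tendsto (fun K : ℝ => ⨆ n : ℕ, ∫⁻ ω in {ω | K < |ξ n ω|}, ENNReal.ofReal |ξ n ω| ∂P)
    Filter.atTop (nhds 0)

/-!
Both laws are images of the same vector `V Z`, under the random scalar
`Cₙ = n^{κ/p} (‖Z‖_p^p + Wₙ)^{-1/p}` and under the constant `β^{-1/p}`. Coupling them through
`Z`, the Lévy–Prokhorov distance is at most `ε` once `P(|Cₙ - β^{-1/p}| ‖V Z‖ ≥ ε) ≤ ε`.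
Since `E ‖V Z‖² = k Var Z₁` for every `V` in the Stiefel manifold, Chebyshev makes `‖V Z‖`
bounded in probability uniformly in `n` and `V`, while `Cₙ → β^{-1/p}` in probability:
`E ‖Z‖_p^p = O(n)` and `κ > 1` give `‖Z‖_p^p / n^κ → 0` by Markov, and `Wₙ / n^κ → β`.
-/

open Set Topology
open scoped Matrix

section GeneralizedGaussian

variable {p : ℝ}

def gaussianPDensity (p x : ℝ) : ℝ :=
  (2 * p ^ (1 / p) * Real.Gamma (1 + 1 / p))⁻¹ * Real.exp (-|x| ^ p / p)

lemma gaussianPDensity_nonneg (hp : 0 < p) (x : ℝ) : 0 ≤ gaussianPDensity p x := by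
  unfold gaussianPDensity
  have := Real.Gamma_pos_of_pos (show 0 < 1 + 1 / p by positivity)
  positivity

lemma gaussianPDensity_neg (x : ℝ) : gaussianPDensity p (-x) = gaussianPDensity p x := by
  simp only [gaussianPDensity, abs_neg]

lemma gaussianP_eq_withDensity (p : ℝ) :
    gaussianP p = volume.withDensity fun x => ((gaussianPDensity p x).toNNReal : ℝ≥0∞) :=
  rfl

lemma measurable_gaussianPDensity : Measurable (gaussianPDensity p) := by
  unfold gaussianPDensity
  fun_prop

lemma integrable_gaussianP_iff (hp : 0 < p) {g : ℝ → ℝ} :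
    Integrable g (gaussianP p) ↔ Integrable fun x => gaussianPDensity p x * g x := by
  rw [gaussianP_eq_withDensity, integrable_withDensity_iff_integrable_smul
    measurable_gaussianPDensity.real_toNNReal]
  simp only [NNReal.smul_def, Real.coe_toNNReal _ (gaussianPDensity_nonneg hp _), smul_eq_mul]

lemma integral_gaussianP (hp : 0 < p) (g : ℝ → ℝ) :
    ∫ x, g x ∂gaussianP p = ∫ x, gaussianPDensity p x * g x := by
  rw [gaussianP_eq_withDensity, integral_withDensity_eq_integral_smul
    measurable_gaussianPDensity.real_toNNReal]
  simp only [NNReal.smul_def, Real.coe_toNNReal _ (gaussianPDensity_nonneg hp _), smul_eq_mul]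

lemma integrable_abs_rpow_mul_exp_neg_abs_rpow {s : ℝ} (hp : 0 < p) (hs : -1 < s) :
    Integrable fun x : ℝ => |x| ^ s * Real.exp (-|x| ^ p / p) := by
  have hIoi : IntegrableOn (fun x : ℝ => |x| ^ s * Real.exp (-|x| ^ p / p)) (Ioi 0) := by
    refine (integrableOn_rpow_mul_exp_neg_mul_rpow hs hp (inv_pos.2 hp)).congr_fun
      (fun x hx => ?_) measurableSet_Ioi
    dsimp only
    rw [abs_of_pos (mem_Ioi.1 hx)]
    ring_nf
  have hIic : IntegrableOn (fun x : ℝ => |x| ^ s * Real.exp (-|x| ^ p / p)) (Iic 0) := by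
    have hneg : MeasurableEmbedding fun x : ℝ => -x := (Homeomorph.neg ℝ).measurableEmbedding
    rw [← Measure.map_neg_eq_self (volume : Measure ℝ), hneg.integrableOn_map_iff]
    simp_rw [Function.comp_def, abs_neg, neg_preimage, neg_Iic, neg_zero]
    exact (integrableOn_Ici_iff_integrableOn_Ioi).mpr hIoi
  rw [← integrableOn_univ, ← Iic_union_Ioi (a := (0 : ℝ))]
  exact hIic.union hIoi

lemma integrable_abs_rpow_gaussianP {s : ℝ} (hp : 0 < p) (hs : -1 < s) :
    Integrable (fun x : ℝ => |x| ^ s) (gaussianP p) := by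
  rw [integrable_gaussianP_iff hp]
  refine ((integrable_abs_rpow_mul_exp_neg_abs_rpow hp hs).const_mul
    (2 * p ^ (1 / p) * Real.Gamma (1 + 1 / p))⁻¹).congr (.of_forall fun x => ?_)
  simp only [gaussianPDensity]
  ring

lemma memLp_id_two_gaussianP (hp : 0 < p) : MemLp id 2 (gaussianP p) := by
  rw [memLp_two_iff_integrable_sq aestronglyMeasurable_id]
  refine (integrable_abs_rpow_gaussianP hp (s := 2) (by norm_num)).congr (.of_forall fun x => ?_)
  simp only [Real.rpow_two, sq_abs, id]

lemma integral_id_gaussianP (hp : 0 < p) : ∫ x, x ∂gaussianP p = 0 := by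
  rw [integral_gaussianP hp]
  have h := integral_neg_eq_self (fun x => gaussianPDensity p x * x) volume
  simp only [gaussianPDensity_neg, mul_neg, integral_neg] at h
  linarith

end GeneralizedGaussian

section ConvergenceInMeasure

variable {α ι E : Type*} {m : MeasurableSpace α} {μ : Measure α} {l : Filter ι}

lemma MeasureTheory.TendstoInMeasure.add [SeminormedAddCommGroup E] {f g : ι → α → E}
    {f' g' : α → E}
    (hf : TendstoInMeasure μ f l f') (hg : TendstoInMeasure μ g l g') :
    TendstoInMeasure μ (fun i x => f i x + g i x) l fun x => f' x + g' x := by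
  rw [tendstoInMeasure_iff_dist] at hf hg ⊢
  intro ε hε
  have hsub : ∀ i, {x | ε ≤ dist (f i x + g i x) (f' x + g' x)} ⊆
      {x | ε / 2 ≤ dist (f i x) (f' x)} ∪ {x | ε / 2 ≤ dist (g i x) (g' x)} := by
    intro i x hx
    by_contra h
    simp only [mem_union, mem_ofPred_eq, not_or, not_le] at hx h
    linarith [dist_add_add_le (f i x) (g i x) (f' x) (g' x)]
  refine tendsto_of_tendsto_of_tendsto_of_le_of_le tendsto_const_nhds
    (by simpa using (hf (ε / 2) (by positivity)).add (hg (ε / 2) (by positivity)))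
    (fun i => zero_le) (fun i => (measure_mono (hsub i)).trans (measure_union_le _ _))

lemma MeasureTheory.TendstoInMeasure.comp_continuousAt [PseudoMetricSpace E] {F : Type*}
    [PseudoMetricSpace F] {f : ι → α → E} {c : E} {φ : E → F}
    (hf : TendstoInMeasure μ f l fun _ => c) (hφ : ContinuousAt φ c) :
    TendstoInMeasure μ (fun i x => φ (f i x)) l fun _ => φ c := by
  rw [tendstoInMeasure_iff_dist] at hf ⊢
  intro ε hε
  obtain ⟨δ, hδ, hφδ⟩ := Metric.continuousAt_iff.mp hφ ε hε
  refine tendsto_of_tendsto_of_tendsto_of_le_of_le tendsto_const_nhds (hf δ hδ)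
    (fun i => zero_le) (fun i => measure_mono fun x hx => ?_)
  by_contra h
  exact (not_le.mpr (hφδ (not_le.mp h))) hx

lemma tendstoInMeasure_zero_of_tendsto_integral [IsFiniteMeasure μ] {f : ι → α → ℝ}
    (hf_nonneg : ∀ i x, 0 ≤ f i x) (hf_int : ∀ i, Integrable (f i) μ)
    (hf : Tendsto (fun i => ∫ x, f i x ∂μ) l (𝓝 0)) : TendstoInMeasure μ f l 0 := by
  rw [tendstoInMeasure_iff_measureReal_dist]
  intro ε hε
  refine tendsto_of_tendsto_of_tendsto_of_le_of_le tendsto_const_nhds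
    (by simpa using hf.div_const ε) (fun i => measureReal_nonneg) (fun i => ?_)
  simp only [Pi.zero_apply, Real.dist_eq, sub_zero, abs_of_nonneg (hf_nonneg i _)]
  rw [le_div_iff₀ hε, mul_comm]
  exact mul_meas_ge_le_integral_of_nonneg (.of_forall (hf_nonneg i)) (hf_int i) ε

end ConvergenceInMeasure

section LevyProkhorov

variable {Ω E : Type*} [MeasurableSpace Ω] {P : Measure Ω} [IsProbabilityMeasure P]

lemma levyProkhorovDist_map_le_of_measure_le [PseudoMetricSpace E] [MeasurableSpace E]
    [OpensMeasurableSpace E] {X Y : Ω → E} (hX : Measurable X) (hY : Measurable Y) {ε : ℝ}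
    (hε : 0 ≤ ε) (h : P {ω | ε ≤ dist (X ω) (Y ω)} ≤ ENNReal.ofReal ε) :
    levyProkhorovDist (P.map X) (P.map Y) ≤ ε := by
  have := Measure.isProbabilityMeasure_map (μ := P) hX.aemeasurable
  have := Measure.isProbabilityMeasure_map (μ := P) hY.aemeasurable
  refine levyProkhorovDist_le_of_forall_le _ _ hε fun ε' B hε' hB => ?_
  rw [Measure.map_apply hX hB, Measure.map_apply hY Metric.isOpen_thickening.measurableSet]
  have hsub : X ⁻¹' B ⊆ Y ⁻¹' Metric.thickening ε' B ∪ {ω | ε ≤ dist (X ω) (Y ω)} := by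
    intro ω hω
    by_cases hd : ε ≤ dist (X ω) (Y ω)
    · exact Or.inr hd
    · exact Or.inl (Metric.mem_thickening_iff.mpr
        ⟨X ω, hω, by rw [dist_comm]; linarith [not_le.mp hd]⟩)
  calc P (X ⁻¹' B) ≤ P (Y ⁻¹' Metric.thickening ε' B) + P {ω | ε ≤ dist (X ω) (Y ω)} :=
        (measure_mono hsub).trans (measure_union_le _ _)
    _ ≤ P (Y ⁻¹' Metric.thickening ε' B) + ENNReal.ofReal ε' := by
        gcongr
        exact h.trans (ENNReal.ofReal_le_ofReal hε'.le)

end LevyProkhorov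

section LevyProkhorovSmul

variable {Ω E : Type*} [MeasurableSpace Ω] {P : Measure Ω} [NormedAddCommGroup E] [NormedSpace ℝ E]

lemma measure_dist_smul_ge_le (X : Ω → E) (C : Ω → ℝ) (b δ R : ℝ) :
    P {ω | δ * R ≤ dist (C ω • X ω) (b • X ω)} ≤
      P {ω | δ ≤ dist (C ω) b} + P {ω | R ≤ ‖X ω‖} := by
  refine (measure_mono fun ω hω => ?_).trans (measure_union_le _ _)
  by_contra h
  simp only [mem_union, mem_ofPred_eq, not_or, not_le] at hω h
  rw [dist_eq_norm, ← sub_smul, norm_smul, ← dist_eq_norm] at hω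
  linarith [mul_lt_mul'' h.1 h.2 dist_nonneg (norm_nonneg _)]

variable [IsProbabilityMeasure P] [MeasurableSpace E] [BorelSpace E] [SecondCountableTopology E]

lemma eventually_levyProkhorovDist_smul_le {ι : ℕ → Type*} {S : (n : ℕ) → Set (ι n)}
    {X : (n : ℕ) → ι n → Ω → E} (hX : ∀ n i, Measurable (X n i))
    (htight : ∀ η > 0, ∃ R > 0, ∀ n, ∀ i ∈ S n, P {ω | R ≤ ‖X n i ω‖} ≤ ENNReal.ofReal η)
    {C : ℕ → Ω → ℝ} (hC_meas : ∀ n, Measurable (C n)) {b : ℝ}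
    (hC : TendstoInMeasure P C atTop fun _ => b) {ε : ℝ} (hε : 0 < ε) :
    ∀ᶠ n in atTop, ∀ i ∈ S n, levyProkhorovDist (P.map fun ω => C n ω • X n i ω)
      (P.map fun ω => b • X n i ω) ≤ ε := by
  obtain ⟨R, hR, hXR⟩ := htight (ε / 2) (by positivity)
  have hCδ := (tendstoInMeasure_iff_dist.mp hC (ε / R) (by positivity)).eventually
    (Iic_mem_nhds (ENNReal.ofReal_pos.mpr (half_pos hε)))
  filter_upwards [hCδ] with n hn i hi
  refine levyProkhorovDist_map_le_of_measure_le (X := fun ω => C n ω • X n i ω)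
    (Y := fun ω => b • X n i ω) ((hC_meas n).smul (hX n i))
    ((hX n i).const_smul b) hε.le ?_
  calc _ ≤ P {ω | ε / R ≤ dist (C n ω) b} + P {ω | R ≤ ‖X n i ω‖} := by
        simpa only [div_mul_cancel₀ ε hR.ne'] using
          measure_dist_smul_ge_le (X n i) (C n) b (ε / R) R
    _ ≤ ENNReal.ofReal (ε / 2) + ENNReal.ofReal (ε / 2) := add_le_add hn (hXR n i hi)
    _ = ENNReal.ofReal ε := by rw [← ENNReal.ofReal_add (by positivity) (by positivity), add_halves]

lemma tendsto_iSup_levyProkhorovDist_smul {ι : ℕ → Type*} {S : (n : ℕ) → Set (ι n)}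
    {X : (n : ℕ) → ι n → Ω → E} (hX : ∀ n i, Measurable (X n i))
    (htight : ∀ η > 0, ∃ R > 0, ∀ n, ∀ i ∈ S n, P {ω | R ≤ ‖X n i ω‖} ≤ ENNReal.ofReal η)
    {C : ℕ → Ω → ℝ} (hC_meas : ∀ n, Measurable (C n)) {b : ℝ}
    (hC : TendstoInMeasure P C atTop fun _ => b) :
    Tendsto (fun n => ⨆ i ∈ S n, levyProkhorovDist (P.map fun ω => C n ω • X n i ω)
      (P.map fun ω => b • X n i ω)) atTop (𝓝 0) := by
  refine tendsto_order.2 ⟨fun a ha => .of_forall fun n => ha.trans_le ?_, fun a ha => ?_⟩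
  · exact Real.iSup_nonneg fun i => Real.iSup_nonneg fun _ => ENNReal.toReal_nonneg
  · filter_upwards [eventually_levyProkhorovDist_smul_le hX htight hC_meas hC (half_pos ha)]
      with n hn
    exact (Real.iSup_le (fun i => Real.iSup_le (hn i) (half_pos ha).le) (half_pos ha).le).trans_lt
      (half_lt_self ha)

end LevyProkhorovSmul

section SecondMoments

variable {Ω E : Type*} [MeasurableSpace Ω] {P : Measure Ω} [IsProbabilityMeasure P]

lemma measure_norm_ge_le_integral_norm_sq_div [NormedAddCommGroup E] {Y : Ω → E}
    (hY : Integrable (fun ω => ‖Y ω‖ ^ 2) P) {R : ℝ} (hR : 0 < R) :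
    P {ω | R ≤ ‖Y ω‖} ≤ ENNReal.ofReal ((∫ ω, ‖Y ω‖ ^ 2 ∂P) / R ^ 2) := by
  have hset : {ω | R ≤ ‖Y ω‖} = {ω | R ^ 2 ≤ ‖Y ω‖ ^ 2} := by
    ext ω
    exact (pow_le_pow_iff_left₀ hR.le (norm_nonneg _) two_ne_zero).symm
  rw [hset, ENNReal.le_ofReal_iff_toReal_le (measure_ne_top _ _)
    (div_nonneg (integral_nonneg fun ω => by positivity) (by positivity)),
    le_div_iff₀ (by positivity), mul_comm]
  exact mul_meas_ge_le_integral_of_nonneg (.of_forall fun ω => by positivity) hY _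

lemma uniform_tight_of_integral_norm_sq_le [NormedAddCommGroup E] {ι : ℕ → Type*}
    {S : (n : ℕ) → Set (ι n)} {X : (n : ℕ) → ι n → Ω → E} {K : ℝ}
    (hint : ∀ n, ∀ i ∈ S n, Integrable (fun ω => ‖X n i ω‖ ^ 2) P)
    (hK : ∀ n, ∀ i ∈ S n, ∫ ω, ‖X n i ω‖ ^ 2 ∂P ≤ K) :
    ∀ η > 0, ∃ R > 0, ∀ n, ∀ i ∈ S n, P {ω | R ≤ ‖X n i ω‖} ≤ ENNReal.ofReal η := by
  intro η hη
  obtain ⟨R, hKR, hR⟩ := (((tendsto_const_nhds (x := K)).div_atTop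
    (tendsto_pow_atTop two_ne_zero)).eventually (Iic_mem_nhds hη)).and
    (eventually_gt_atTop 0) |>.exists
  refine ⟨R, hR, fun n i hi => (measure_norm_ge_le_integral_norm_sq_div (hint n i hi) hR).trans
    (ENNReal.ofReal_le_ofReal ((div_le_div_of_nonneg_right (hK n i hi) (by positivity)).trans hKR))⟩

lemma integral_sq_sum_mul {ι : Type*} [Fintype ι] {X : ι → Ω → ℝ} (hX : ∀ i, MemLp (X i) 2 P)
    (hmean : ∀ i, P[X i] = 0) (hindep : Pairwise fun i j => IndepFun (X i) (X j) P)
    (v : ι → ℝ) : ∫ ω, (∑ i, v i * X i ω) ^ 2 ∂P = ∑ i, v i ^ 2 * Var[X i; P] := by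
  have hvX : ∀ i, MemLp (fun ω => v i * X i ω) 2 P := fun i => (hX i).const_mul (v i)
  have hsum : MemLp (fun ω => ∑ i, v i * X i ω) 2 P := memLp_finsetSum _ fun i _ => hvX i
  rw [← variance_of_integral_eq_zero hsum.aemeasurable (by
    simp [integral_finsetSum _ fun i _ => (hvX i).integrable one_le_two, integral_const_mul,
      hmean])]
  have := IndepFun.variance_sum (s := Finset.univ) (fun i _ => hvX i)
    fun i _ j _ hij => (hindep hij).comp (measurable_const_mul (v i)) (measurable_const_mul (v j))
  simpa [Finset.sum_fn, variance_const_mul] using this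

end SecondMoments

section Stiefel

variable {Ω : Type*} [MeasurableSpace Ω] {P : Measure Ω} {n k : ℕ}

lemma euc_mulVec_const_mul (V : Matrix (Fin k) (Fin n) ℝ) (c : ℝ) (x : Fin n → ℝ) :
    euc (V *ᵥ fun j => c * x j) = c • euc (V *ᵥ x) := by
  ext i
  simp [euc, Matrix.mulVec, dotProduct, Finset.mul_sum, mul_left_comm]

lemma norm_sq_euc_mulVec (V : Matrix (Fin k) (Fin n) ℝ) (x : Fin n → ℝ) :
    ‖euc (V *ᵥ x)‖ ^ 2 = ∑ i, (∑ j, V i j * x j) ^ 2 := by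
  simp [EuclideanSpace.real_norm_sq_eq, euc, Matrix.mulVec, dotProduct]

lemma sum_sq_eq_one_of_mem_stiefel {V : Matrix (Fin k) (Fin n) ℝ} (hV : V ∈ Stiefel n k)
    (i : Fin k) : ∑ j, V i j ^ 2 = 1 := by
  simpa [Matrix.mul_apply, sq] using congrFun (congrFun hV i) i

lemma integrable_norm_sq_euc_mulVec (V : Matrix (Fin k) (Fin n) ℝ) {X : Fin n → Ω → ℝ}
    (hX : ∀ j, MemLp (X j) 2 P) : Integrable (fun ω => ‖euc (V *ᵥ fun j => X j ω)‖ ^ 2) P := by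
  simp only [norm_sq_euc_mulVec]
  exact integrable_finsetSum _ fun i _ =>
    (memLp_finsetSum _ fun j _ => (hX j).const_mul (V i j)).integrable_sq

lemma integral_norm_sq_euc_mulVec_of_mem_stiefel [IsProbabilityMeasure P]
    {V : Matrix (Fin k) (Fin n) ℝ} (hV : V ∈ Stiefel n k) {X : Fin n → Ω → ℝ}
    (hX : ∀ j, MemLp (X j) 2 P) (hmean : ∀ j, P[X j] = 0)
    (hindep : Pairwise fun i j => IndepFun (X i) (X j) P) {σ2 : ℝ}
    (hvar : ∀ j, Var[X j; P] = σ2) :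
    ∫ ω, ‖euc (V *ᵥ fun j => X j ω)‖ ^ 2 ∂P = k * σ2 := by
  simp only [norm_sq_euc_mulVec]
  rw [integral_finsetSum _ fun i _ =>
    (memLp_finsetSum _ fun j _ => (hX j).const_mul (V i j)).integrable_sq]
  simp [integral_sq_sum_mul hX hmean hindep, hvar, ← Finset.sum_mul,
    sum_sq_eq_one_of_mem_stiefel hV]

end Stiefel

section LawGaussianP

variable {Ω : Type*} [MeasurableSpace Ω] {P : Measure Ω} {p : ℝ} {X : Ω → ℝ}

lemma integral_comp_of_map_eq_gaussianP (hX : Measurable X) (hlaw : P.map X = gaussianP p)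
    {g : ℝ → ℝ} (hg : Continuous g) : ∫ ω, g (X ω) ∂P = ∫ x, g x ∂gaussianP p := by
  rw [← hlaw, integral_map hX.aemeasurable hg.aestronglyMeasurable]

lemma memLp_two_of_map_eq_gaussianP (hp : 0 < p) (hX : Measurable X)
    (hlaw : P.map X = gaussianP p) : MemLp X 2 P := by
  simpa using (memLp_map_measure_iff aestronglyMeasurable_id hX.aemeasurable).mp
    (hlaw ▸ memLp_id_two_gaussianP hp)

lemma integrable_abs_rpow_of_map_eq_gaussianP (hp : 0 < p) (hX : Measurable X)
    (hlaw : P.map X = gaussianP p) : Integrable (fun ω => |X ω| ^ p) P :=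
  (integrable_map_measure ((Real.continuous_rpow_const hp.le).comp
    continuous_abs).aestronglyMeasurable hX.aemeasurable).mp
    (hlaw ▸ integrable_abs_rpow_gaussianP hp (by linarith))

lemma integral_eq_zero_of_map_eq_gaussianP (hp : 0 < p) (hX : Measurable X)
    (hlaw : P.map X = gaussianP p) : P[X] = 0 :=
  (integral_comp_of_map_eq_gaussianP hX hlaw continuous_id).trans (integral_id_gaussianP hp)

lemma variance_of_map_eq_gaussianP (hX : Measurable X) (hlaw : P.map X = gaussianP p) :
    Var[X; P] = Var[id; gaussianP p] := by
  rw [← hlaw, variance_map measurable_id.aemeasurable hX.aemeasurable]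
  rfl

end LawGaussianP

section NormalizingFactor

variable {Ω : Type*} [MeasurableSpace Ω] {P : Measure Ω} {κ : ℝ}

lemma tendsto_natCast_div_rpow_atTop (hκ : 1 < κ) :
    Tendsto (fun n : ℕ => (n : ℝ) / (n : ℝ) ^ κ) atTop (𝓝 0) := by
  refine ((tendsto_rpow_neg_atTop (by linarith : 0 < κ - 1)).comp
    tendsto_natCast_atTop_atTop).congr' ?_
  filter_upwards [eventually_gt_atTop 0] with n hn
  rw [Function.comp_apply, neg_sub, Real.rpow_sub (by positivity), Real.rpow_one]

lemma tendstoInMeasure_sum_div_rpow_zero [IsFiniteMeasure P] (hκ : 1 < κ) {Y : ℕ → Ω → ℝ}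
    (hY_nonneg : ∀ j ω, 0 ≤ Y j ω) (hY_int : ∀ j, Integrable (Y j) P) {m : ℝ}
    (hY_mean : ∀ j, ∫ ω, Y j ω ∂P = m) :
    TendstoInMeasure P (fun (n : ℕ) ω => (∑ i : Fin n, Y i ω) / (n : ℝ) ^ κ) atTop 0 := by
  have hint : ∀ n : ℕ, Integrable (fun ω => ∑ i : Fin n, Y i ω) P := fun n =>
    integrable_finsetSum (f := fun (i : Fin n) => Y i) _ fun i _ => hY_int i
  have hmean : ∀ n : ℕ, ∫ ω, (∑ i : Fin n, Y i ω) / (n : ℝ) ^ κ ∂P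
      = (n : ℝ) / (n : ℝ) ^ κ * m := fun n => by
    rw [integral_div, integral_finsetSum (f := fun (i : Fin n) => Y i) _ fun i _ => hY_int i]
    simp only [hY_mean, Finset.sum_const, Finset.card_univ, Fintype.card_fin, nsmul_eq_mul]
    ring
  refine tendstoInMeasure_zero_of_tendsto_integral
    (fun n ω => div_nonneg (Finset.sum_nonneg fun i _ => hY_nonneg i ω) (by positivity))
    (fun n => (hint n).div_const _) ?_
  simpa only [hmean, zero_mul] using (tendsto_natCast_div_rpow_atTop hκ).mul_const m

lemma div_rpow_neg_one_div {A N : ℝ} (hA : 0 ≤ A) (hN : 0 ≤ N) (κ p : ℝ) :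
    (A / N ^ κ) ^ (-(1 / p)) = N ^ (κ / p) / A ^ (1 / p) := by
  rw [Real.rpow_neg (by positivity), Real.div_rpow hA (by positivity), inv_div,
    ← Real.rpow_mul hN, mul_one_div]

lemma tendstoInMeasure_rpow_div_add_rpow {S W : ℕ → Ω → ℝ} (hS_nonneg : ∀ n ω, 0 ≤ S n ω)
    (hW_nonneg : ∀ n ω, 0 ≤ W n ω) {β : ℝ} (hβ : 0 < β)
    (hS : TendstoInMeasure P (fun (n : ℕ) ω => S n ω / (n : ℝ) ^ κ) atTop 0)
    (hW : TendstoInMeasure P (fun (n : ℕ) ω => W n ω / (n : ℝ) ^ κ) atTop fun _ => β) (p : ℝ) :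
    TendstoInMeasure P (fun (n : ℕ) ω => (n : ℝ) ^ (κ / p) / (S n ω + W n ω) ^ (1 / p))
      atTop fun _ => (1 / β) ^ (1 / p) := by
  have h := (hS.add hW).comp_continuousAt (φ := fun t : ℝ => t ^ (-(1 / p))) (c := 0 + β)
    (Real.continuousAt_rpow_const _ _ (Or.inl (by simpa using hβ.ne')))
  refine h.congr (fun n => .of_forall fun ω => ?_) (.of_forall fun ω => ?_)
  · simp only [← add_div]
    exact div_rpow_neg_one_div (add_nonneg (hS_nonneg n ω) (hW_nonneg n ω)) n.cast_nonneg κ p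
  · simp [Real.rpow_neg hβ.le, Real.inv_rpow hβ.le]

end NormalizingFactor

theorem statement7_general
    (p : ℝ) (hp : 1 ≤ p) (k : ℕ) (κ : ℝ) (hκ : 1 < κ) (β : ℝ) (hβ : 0 < β)
    (Ω : Type) [MeasurableSpace Ω] (P : Measure Ω) [IsProbabilityMeasure P]
    (Z : ℕ → Ω → ℝ) (hZmeas : ∀ j, Measurable (Z j))
    (hZlaw : ∀ j, Measure.map (Z j) P = gaussianP p)
    (hZindep : iIndepFun (m := fun _ => inferInstance) Z P)
    (W : ℕ → Ω → ℝ) (hWmeas : ∀ n, Measurable (W n)) (hWpos : ∀ n ω, 0 ≤ W n ω)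
    (hWconv : TendstoInMeasure P (fun (n : ℕ) ω => W n ω / (n : ℝ) ^ κ) Filter.atTop (fun _ => β)) :
    Filter.Tendsto
      (fun n : ℕ => ⨆ V ∈ Stiefel n k, levyProkhorovDist
        (Measure.map (fun ω => euc (Matrix.mulVec V (fun j : Fin n => (n : ℝ) ^ (κ / p) * Z (j : ℕ) ω / ((∑ i : Fin n, |Z (i : ℕ) ω| ^ p) + W n ω) ^ (1 / p)))) P)
        (Measure.map (fun ω => euc (Matrix.mulVec V (fun j : Fin n => ((1 / β) ^ (1 / p)) * Z (j : ℕ) ω))) P))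
      Filter.atTop (nhds 0) := by
  have hp0 : 0 < p := by linarith
  have hZL2 j := memLp_two_of_map_eq_gaussianP hp0 (hZmeas j) (hZlaw j)
  have hS := tendstoInMeasure_sum_div_rpow_zero (P := P) hκ (fun j ω => by positivity)
    (fun j => integrable_abs_rpow_of_map_eq_gaussianP hp0 (hZmeas j) (hZlaw j))
    (fun j => integral_comp_of_map_eq_gaussianP (hZmeas j) (hZlaw j)
      ((Real.continuous_rpow_const hp0.le).comp continuous_abs))
  have hC := tendstoInMeasure_rpow_div_add_rpow (fun n ω => by positivity) hWpos hβ hS hWconv p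
  have hCmeas (n : ℕ) : Measurable fun ω =>
      (n : ℝ) ^ (κ / p) / ((∑ i : Fin n, |Z i ω| ^ p) + W n ω) ^ (1 / p) := by
    fun_prop
  have hX n (V : Matrix (Fin k) (Fin n) ℝ) : Measurable fun ω => euc (V *ᵥ fun j => Z j ω) :=
    (MeasurableEquiv.toLp 2 (Fin k → ℝ)).measurable.comp (by fun_prop)
  have htight := uniform_tight_of_integral_norm_sq_le (S := fun n => Stiefel n k)
    (K := k * Var[id; gaussianP p]) (fun n V _ => integrable_norm_sq_euc_mulVec V fun j => hZL2 j)
    fun n V hV => (integral_norm_sq_euc_mulVec_of_mem_stiefel hV (fun j => hZL2 j)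
      (fun j => integral_eq_zero_of_map_eq_gaussianP hp0 (hZmeas j) (hZlaw j))
      (fun i j hij => hZindep.indepFun (Fin.val_injective.ne hij))
      (fun j => variance_of_map_eq_gaussianP (hZmeas j) (hZlaw j))).le
  simpa only [mul_div_right_comm, euc_mulVec_const_mul] using
    tendsto_iSup_levyProkhorovDist_smul hX htight hCmeas hC

theorem statement7
    (p : ℝ) (hp : 1 ≤ p) (k : ℕ) (κ : ℝ) (hκ : 1 < κ) (β : ℝ) (hβ : 0 < β)
    (Ω : Type) [MeasurableSpace Ω] (P : Measure Ω) [IsProbabilityMeasure P]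
    (Z : ℕ → Ω → ℝ) (hZmeas : ∀ j, Measurable (Z j))
    (hZlaw : ∀ j, Measure.map (Z j) P = gaussianP p)
    (hZindep : iIndepFun (m := fun _ => inferInstance) Z P)
    (W : ℕ → Ω → ℝ) (hWmeas : ∀ n, Measurable (W n)) (hWpos : ∀ n ω, 0 ≤ W n ω)
    (hWindep : ∀ n : ℕ, IndepFun (fun ω (i : Fin n) => Z i ω) (W n) P)
    (hWconv : TendstoInMeasure P (fun (n : ℕ) ω => W n ω / (n : ℝ) ^ κ) Filter.atTop (fun _ => β))
    (hUI : UIFamily P (fun (n : ℕ) ω => (W n ω / (n : ℝ) ^ κ) ^ (-(2 / p)))) :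
    Filter.Tendsto
      (fun n : ℕ => ⨆ V ∈ Stiefel n k, levyProkhorovDist
        (Measure.map (fun ω => euc (Matrix.mulVec V (fun j : Fin n => (n : ℝ) ^ (κ / p) * Z (j : ℕ) ω / ((∑ i : Fin n, |Z (i : ℕ) ω| ^ p) + W n ω) ^ (1 / p)))) P)
        (Measure.map (fun ω => euc (Matrix.mulVec V (fun j : Fin n => ((1 / β) ^ (1 / p)) * Z (j : ℕ) ω))) P))
      Filter.atTop (nhds 0) :=
  statement7_general p hp k κ hκ β hβ Ω P Z hZmeas hZlaw hZindep W hWmeas hWpos hWconv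

end
end

section
/- Let p ∈ [1,∞), b > 0, κ ∈ (0,∞), and let (a_n)_{n∈ℕ} be a positive increasing sequence with m := inf_n a_n > 4/p and lim_{n→∞} a_n/n^κ = λ ∈ (0,∞). For each n let W_n have the gamma distribution with shape a_n and rate b. Then, with M_p defined by M_p^{-1} = ∏_{i=0}^{4} (1 - 4/(p(m+i))), one has for every n ∈ ℕ that E[(n^κ/W_n)^{4/p}] ≤ b^{4/p} M_p (a_n/n^κ)^{-4/p}, and consequently sup_{n∈ℕ} E[(n^κ/W_n)^{4/p}] < ∞. -/
open MeasureTheory ProbabilityTheory Filter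
open scoped ENNReal NNReal

noncomputable section

/-!
With `t = 4 / p`, the moment `E[(c / W)^t]` of `W ~ Γ(a, b)` equals `c^t b^t Γ(a - t) / Γ(a)`,
since `x^(-t)` times the density of `Γ(a, b)` is a multiple of the density of `Γ(a - t, b)`.
Log-convexity of `Γ` on `[x, x + N]` with weight `t / N`, together with
`Γ(x + N) = x (x + 1) ⋯ (x + N - 1) Γ(x)`, gives
`Γ(x - t) / Γ(x) ≤ x^(-t) ∏_{i < N} (1 - t / (x + i))⁻¹`, and the product only decreases when `x`
is replaced by `m ≤ x`. This is the bound with `N = 5 > t`; as `a_n / n^κ → λ > 0`, the right-hand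
sides stay bounded.
-/

theorem one_sub_div_add_natCast_pos {t m : ℝ} (hm : 0 < m) (htm : t < m) (i : ℕ) :
    0 < 1 - t / (m + i) := by
  rw [sub_pos, div_lt_one (by positivity)]
  linarith [(Nat.cast_nonneg i : (0 : ℝ) ≤ i)]

namespace Real

theorem Gamma_add_nat_eq_prod_mul {x : ℝ} (hx : 0 < x) (N : ℕ) :
    Gamma (x + N) = (∏ i ∈ Finset.range N, (x + i)) * Gamma x := by
  induction N with
  | zero => simp
  | succ N ih =>
    rw [Nat.cast_succ, ← add_assoc, Gamma_add_one (by positivity), ih,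
      Finset.prod_range_succ]
    ring

theorem prod_mul_Gamma_sub_le {x t : ℝ} {N : ℕ} (ht : 0 < t) (htN : t < N) (htx : t < x) :
    (∏ i ∈ Finset.range N, (x - t + i)) * Gamma (x - t) ≤
      (∏ i ∈ Finset.range N, (x + i)) * x ^ (-t) * Gamma x := by
  have hx : 0 < x := ht.trans htx
  have hN : (0 : ℝ) < N := ht.trans htN
  set θ := t / N
  have hθ : 0 < θ := div_pos ht hN
  have hθ1 : θ < 1 := (div_lt_one hN).mpr htN
  have hNθ : N * θ = t := mul_div_cancel₀ t hN.ne'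
  set Px := ∏ i ∈ Finset.range N, (x + i)
  have hPx : 0 < Px := Finset.prod_pos fun i _ => by positivity
  have hxN : x ^ N ≤ Px := by
    simpa using Finset.prod_le_prod (s := Finset.range N) (fun _ _ => hx.le)
      (fun i _ => le_add_of_nonneg_right (Nat.cast_nonneg i))
  have hPx_rpow : Px ^ (-θ) ≤ x ^ (-t) := by
    calc Px ^ (-θ) ≤ (x ^ N) ^ (-θ) :=
          rpow_le_rpow_of_nonpos (by positivity) hxN (neg_nonpos.mpr hθ.le)
      _ = x ^ (-t) := by
          rw [← rpow_natCast, ← rpow_mul hx.le, mul_neg, hNθ]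
  have hGx : 0 < Gamma x := Gamma_pos_of_pos hx
  calc (∏ i ∈ Finset.range N, (x - t + i)) * Gamma (x - t)
      = Gamma ((1 - θ) * (x + N) + θ * x) := by
        rw [← Gamma_add_nat_eq_prod_mul (by linarith)]
        congr 1
        linear_combination hNθ
    _ ≤ Gamma (x + N) ^ (1 - θ) * Gamma x ^ θ :=
        Gamma_mul_add_mul_le_rpow_Gamma_mul_rpow_Gamma (by positivity) hx (by linarith) hθ
          (by ring)
    _ = Px * Px ^ (-θ) * Gamma x := by
        rw [Gamma_add_nat_eq_prod_mul hx, mul_rpow hPx.le hGx.le, mul_assoc,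
          ← rpow_add hGx, sub_add_cancel, rpow_one, sub_eq_add_neg, rpow_add hPx, rpow_one]
    _ ≤ Px * x ^ (-t) * Gamma x := by gcongr

theorem Gamma_sub_le {x t m : ℝ} {N : ℕ} (ht : 0 < t) (htN : t < N) (htm : t < m)
    (hmx : m ≤ x) :
    Gamma (x - t) ≤ (∏ i ∈ Finset.range N, (1 - t / (m + i)))⁻¹ * x ^ (-t) * Gamma x := by
  have hm : 0 < m := ht.trans htm
  have hx : 0 < x := hm.trans_le hmx
  set Qm := ∏ i ∈ Finset.range N, (1 - t / (m + i))
  set Qx := ∏ i ∈ Finset.range N, (1 - t / (x + i))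
  set Px := ∏ i ∈ Finset.range N, (x + i)
  have hQm : 0 < Qm := Finset.prod_pos fun i _ => one_sub_div_add_natCast_pos hm htm i
  have hQ : Qm ≤ Qx :=
    Finset.prod_le_prod (fun i _ => (one_sub_div_add_natCast_pos hm htm i).le) fun i _ => by gcongr
  have hPx : 0 < Px := Finset.prod_pos fun i _ => by positivity
  have hsplit : ∏ i ∈ Finset.range N, (x - t + i) = Qx * Px := by
    rw [← Finset.prod_mul_distrib]
    refine Finset.prod_congr rfl fun i _ => ?_
    field_simp
    ring
  have key : Qx * Gamma (x - t) ≤ x ^ (-t) * Gamma x := by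
    have := prod_mul_Gamma_sub_le ht htN (htm.trans_le hmx)
    rw [hsplit] at this
    refine le_of_mul_le_mul_left ?_ hPx
    linarith
  calc Gamma (x - t) ≤ Qx⁻¹ * (x ^ (-t) * Gamma x) := by
        rwa [le_inv_mul_iff₀ (hQm.trans_le hQ)]
    _ ≤ Qm⁻¹ * (x ^ (-t) * Gamma x) := by gcongr
    _ = Qm⁻¹ * x ^ (-t) * Gamma x := (mul_assoc _ _ _).symm

end Real

namespace ProbabilityTheory

theorem measurable_gammaPDF (a b : ℝ) : Measurable (gammaPDF a b) :=
  (measurable_gammaPDFReal a b).ennreal_ofReal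

theorem ae_pos_gammaMeasure (a b : ℝ) : ∀ᵐ x ∂gammaMeasure a b, 0 < x := by
  rw [gammaMeasure, ae_withDensity_iff (measurable_gammaPDF a b)]
  filter_upwards [Measure.ae_ne volume 0] with x hx0 hpdf
  exact lt_of_le_of_ne (not_lt.mp fun hx => hpdf (gammaPDF_of_neg hx)) hx0.symm

theorem lintegral_rpow_gammaMeasure {a b s : ℝ} (ha : 0 < a) (hb : 0 < b) (has : 0 < a + s) :
    ∫⁻ x, ENNReal.ofReal (x ^ s) ∂gammaMeasure a b =
      ENNReal.ofReal (Real.Gamma (a + s) / (Real.Gamma a * b ^ s)) := by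
  have hGa := Real.Gamma_pos_of_pos ha
  have hGas := Real.Gamma_pos_of_pos has
  have hdensity : (fun x => gammaPDF a b x * ENNReal.ofReal (x ^ s)) =ᵐ[volume]
      fun x => ENNReal.ofReal (Real.Gamma (a + s) / (Real.Gamma a * b ^ s)) *
        gammaPDF (a + s) b x := by
    filter_upwards [Measure.ae_ne volume 0] with x hx0
    rcases hx0.lt_or_gt with hx | hx
    · simp [gammaPDF_of_neg hx]
    · rw [gammaPDF_of_nonneg hx.le, gammaPDF_of_nonneg hx.le,
        ← ENNReal.ofReal_mul (by positivity), ← ENNReal.ofReal_mul (by positivity)]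
      congr 1
      rw [Real.rpow_add hb, show a + s - 1 = a - 1 + s by ring, Real.rpow_add hx]
      field_simp
  rw [gammaMeasure,
    lintegral_withDensity_eq_lintegral_mul _ (measurable_gammaPDF a b) (by fun_prop)]
  simp only [Pi.mul_apply]
  rw [lintegral_congr_ae hdensity, lintegral_const_mul _ (measurable_gammaPDF _ b),
    lintegral_gammaPDF_eq_one has hb, mul_one]

theorem lintegral_div_rpow_gammaMeasure {a b c t : ℝ} (ha : 0 < a) (hb : 0 < b) (hc : 0 ≤ c)
    (hta : t < a) :
    ∫⁻ x, ENNReal.ofReal ((c / x) ^ t) ∂gammaMeasure a b =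
      ENNReal.ofReal (c ^ t * b ^ t * (Real.Gamma (a - t) / Real.Gamma a)) := by
  have hscale : (fun x : ℝ => ENNReal.ofReal ((c / x) ^ t)) =ᵐ[gammaMeasure a b]
      fun x => ENNReal.ofReal (c ^ t) * ENNReal.ofReal (x ^ (-t)) := by
    filter_upwards [ae_pos_gammaMeasure a b] with x hx
    rw [← ENNReal.ofReal_mul (by positivity), Real.div_rpow hc hx.le, Real.rpow_neg hx.le,
      div_eq_mul_inv]
  rw [lintegral_congr_ae hscale, lintegral_const_mul _ (by fun_prop),
    lintegral_rpow_gammaMeasure ha hb (by linarith),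
    ← ENNReal.ofReal_mul (by positivity), Real.rpow_neg hb.le, ← sub_eq_add_neg]
  congr 1
  field_simp

theorem lintegral_div_rpow_gammaMeasure_le {a b c m t : ℝ} {N : ℕ} (hb : 0 < b) (hc : 0 ≤ c)
    (ht : 0 < t) (htN : t < N) (htm : t < m) (hma : m ≤ a) :
    ∫⁻ x, ENNReal.ofReal ((c / x) ^ t) ∂gammaMeasure a b ≤
      ENNReal.ofReal (b ^ t * (∏ i ∈ Finset.range N, (1 - t / (m + i)))⁻¹ * (a / c) ^ (-t)) := by
  have ha : 0 < a := ht.trans (htm.trans_le hma)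
  rw [lintegral_div_rpow_gammaMeasure ha hb hc (htm.trans_le hma)]
  refine ENNReal.ofReal_le_ofReal ?_
  have hGa := Real.Gamma_pos_of_pos ha
  calc c ^ t * b ^ t * (Real.Gamma (a - t) / Real.Gamma a)
      ≤ c ^ t * b ^ t * ((∏ i ∈ Finset.range N, (1 - t / (m + i)))⁻¹ * a ^ (-t)) := by
        gcongr
        rw [div_le_iff₀ hGa]
        exact Real.Gamma_sub_le ht htN htm hma
    _ = b ^ t * (∏ i ∈ Finset.range N, (1 - t / (m + i)))⁻¹ * (a / c) ^ (-t) := by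
        rw [Real.rpow_neg (div_nonneg ha.le hc), Real.div_rpow ha.le hc, inv_div,
          Real.rpow_neg ha.le]
        ring

end ProbabilityTheory

theorem statement11_general
    (p : ℝ) (hp : 1 ≤ p) (b : ℝ) (hb : 0 < b) (κ : ℝ)
    (a : ℕ → ℝ) (hapos : ∀ n, 0 < a n)
    (m : ℝ) (hm : m = ⨅ n, a n) (hm4 : 4 / p < m)
    (lam : ℝ) (hlam0 : 0 < lam)
    (hlam : Filter.Tendsto (fun n : ℕ => a n / (n : ℝ) ^ κ) Filter.atTop (nhds lam))
    (Ω : Type) [MeasurableSpace Ω] (P : Measure Ω)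
    (W : ℕ → Ω → ℝ) (hWmeas : ∀ n, Measurable (W n))
    (hWlaw : ∀ n, Measure.map (W n) P = gammaMeasure (a n) b)
    (Mp : ℝ) (hMp : Mp⁻¹ = ∏ i ∈ Finset.range 5, (1 - 4 / (p * (m + i)))) :
    (∀ n : ℕ, ∫⁻ ω, ENNReal.ofReal (((n : ℝ) ^ κ / W n ω) ^ (4 / p)) ∂P
      ≤ ENNReal.ofReal (b ^ (4 / p) * Mp * (a n / (n : ℝ) ^ κ) ^ (-(4 / p)))) ∧
    (⨆ n : ℕ, ∫⁻ ω, ENNReal.ofReal (((n : ℝ) ^ κ / W n ω) ^ (4 / p)) ∂P) < ⊤ := by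
  have hp0 : 0 < p := one_pos.trans_le hp
  set t := 4 / p with ht_def
  have ht : 0 < t := by positivity
  have ht5 : t < (5 : ℕ) := by
    rw [ht_def, div_lt_iff₀ hp0]
    push_cast
    linarith
  have hma : ∀ n, m ≤ a n := fun n =>
    hm ▸ ciInf_le ⟨0, by rintro _ ⟨k, rfl⟩; exact (hapos k).le⟩ n
  have hMp' : Mp = (∏ i ∈ Finset.range 5, (1 - t / (m + i)))⁻¹ := by
    rw [← inv_inv Mp, hMp]
    simp only [ht_def, div_div]
  have hbound : ∀ n : ℕ, ∫⁻ ω, ENNReal.ofReal (((n : ℝ) ^ κ / W n ω) ^ t) ∂P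
      ≤ ENNReal.ofReal (b ^ t * Mp * (a n / (n : ℝ) ^ κ) ^ (-t)) := fun n => by
    rw [← lintegral_map (f := fun x => ENNReal.ofReal (((n : ℝ) ^ κ / x) ^ t)) (by fun_prop)
      (hWmeas n), hWlaw n, hMp']
    exact lintegral_div_rpow_gammaMeasure_le hb (by positivity) ht ht5 hm4 (hma n)
  refine ⟨hbound, ?_⟩
  obtain ⟨C, hC⟩ := (hlam.rpow_const (p := -t) (Or.inl hlam0.ne')).bddAbove_range
  have hMp_pos : 0 < Mp := hMp' ▸ inv_pos.mpr
    (Finset.prod_pos fun i _ => one_sub_div_add_natCast_pos (ht.trans hm4) hm4 i)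
  calc ⨆ n : ℕ, ∫⁻ ω, ENNReal.ofReal (((n : ℝ) ^ κ / W n ω) ^ t) ∂P
      ≤ ENNReal.ofReal (b ^ t * Mp * C) := iSup_le fun n =>
        (hbound n).trans (ENNReal.ofReal_le_ofReal (by gcongr; exact hC ⟨n, rfl⟩))
    _ < ⊤ := ENNReal.ofReal_lt_top

theorem statement11
    (p : ℝ) (hp : 1 ≤ p) (b : ℝ) (hb : 0 < b) (κ : ℝ) (hκ : 0 < κ)
    (a : ℕ → ℝ) (hapos : ∀ n, 0 < a n) (hamono : Monotone a)
    (m : ℝ) (hm : m = ⨅ n, a n) (hm4 : 4 / p < m)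
    (lam : ℝ) (hlam0 : 0 < lam)
    (hlam : Filter.Tendsto (fun n : ℕ => a n / (n : ℝ) ^ κ) Filter.atTop (nhds lam))
    (Ω : Type) [MeasurableSpace Ω] (P : Measure Ω) [IsProbabilityMeasure P]
    (W : ℕ → Ω → ℝ) (hWmeas : ∀ n, Measurable (W n))
    (hWlaw : ∀ n, Measure.map (W n) P = gammaMeasure (a n) b)
    (Mp : ℝ) (hMp : Mp⁻¹ = ∏ i ∈ Finset.range 5, (1 - 4 / (p * (m + i)))) :
    (∀ n : ℕ, ∫⁻ ω, ENNReal.ofReal (((n : ℝ) ^ κ / W n ω) ^ (4 / p)) ∂P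
      ≤ ENNReal.ofReal (b ^ (4 / p) * Mp * (a n / (n : ℝ) ^ κ) ^ (-(4 / p)))) ∧
    (⨆ n : ℕ, ∫⁻ ω, ENNReal.ofReal (((n : ℝ) ^ κ / W n ω) ^ (4 / p)) ∂P) < ⊤ :=
  statement11_general p hp b hb κ a hapos m hm hm4 lam hlam0 hlam Ω P W hWmeas hWlaw Mp hMp

end
end

section
/- Let p ≥ 1 and m > 4/p, and set M_p^{-1} = ∏_{i=0}^{4} (1 - 4/(p(m+i))), so that M_p ∈ (0,∞). Then for every real a ≥ m, Γ(a - 4/p)/Γ(a) ≤ M_p · a^{-4/p}. -/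
open MeasureTheory ProbabilityTheory Filter
open scoped ENNReal NNReal

noncomputable section

/-! Write `q = 4 / p`. Log-convexity of `Γ` compares slopes of `log Γ` on adjacent intervals:
the slope on `[x, x + 1]` is `log x`, so `x ^ q Γ(x + 1) ≤ Γ(x + 1 + q)`. Applied at
`x = a - q + 4 ≥ a`, this gives `a ^ q Γ(a - q + 5) ≤ Γ(a + 5)`, and shifting both Gamma values
down by five steps of the functional equation turns it into
`a ^ q ∏_{i<5} (1 - q / (a + i)) Γ(a - q) ≤ Γ(a)`. Each factor of the product increases with `a`,
so it is at least its value `M_p⁻¹` at `a = m`. -/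

open Finset Real

theorem Real.Gamma_add_nat_eq_prod_mul_s12 {x : ℝ} (hx : ∀ k : ℕ, x ≠ -k) (n : ℕ) :
    Gamma (x + n) = (∏ i ∈ range n, (x + i)) * Gamma x := by
  induction n with
  | zero => simp
  | succ n ih =>
    have hxn : x + n ≠ 0 := fun h => hx n (by linarith)
    rw [Nat.cast_succ, ← add_assoc, Gamma_add_one hxn, ih, prod_range_succ]
    ring

theorem Real.rpow_mul_Gamma_add_one_le {x s : ℝ} (hx : 0 < x) (hs : 0 ≤ s) :
    x ^ s * Gamma (x + 1) ≤ Gamma (x + 1 + s) := by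
  rcases hs.eq_or_lt with rfl | hs
  · simp
  have hslope := convexOn_log_Gamma.slope_mono_adjacent (x := x) (y := x + 1) (z := x + 1 + s)
    (Set.mem_Ioi.2 hx) (Set.mem_Ioi.2 (by linarith)) (by linarith) (by linarith)
  have hΓ : log (Gamma (x + 1)) = log x + log (Gamma x) := by
    rw [Gamma_add_one hx.ne', log_mul hx.ne' (Gamma_pos_of_pos hx).ne']
  simp only [Function.comp_apply, hΓ, add_sub_cancel_left, add_sub_cancel_right,
    div_one] at hslope
  have hlog : s * log x + log (Gamma (x + 1)) ≤ log (Gamma (x + 1 + s)) := by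
    rw [le_div_iff₀ hs] at hslope
    linarith
  rwa [← log_rpow hx, ← log_mul (rpow_pos_of_pos hx s).ne' (Gamma_pos_of_pos (by linarith)).ne',
    log_le_log_iff (by positivity) (Gamma_pos_of_pos (by linarith))] at hlog

theorem Real.one_sub_div_add_pos {q m : ℝ} (hq : 0 ≤ q) (hqm : q < m) (i : ℕ) :
    0 < 1 - q / (m + i) :=
  sub_pos.2 <| (div_lt_one (by linarith [i.cast_nonneg (α := ℝ)])).2
    (by linarith [i.cast_nonneg (α := ℝ)])

theorem Real.prod_one_sub_div_add_le {q m a : ℝ} (hq : 0 ≤ q) (hqm : q < m) (hma : m ≤ a)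
    (n : ℕ) : ∏ i ∈ range n, (1 - q / (m + i)) ≤ ∏ i ∈ range n, (1 - q / (a + i)) := by
  refine prod_le_prod (fun i _ => (one_sub_div_add_pos hq hqm i).le) fun i _ => ?_
  have hmi : 0 < m + i := by linarith [i.cast_nonneg (α := ℝ)]
  gcongr

theorem Real.rpow_mul_prod_mul_Gamma_sub_le {n : ℕ} {q a : ℝ} (hq : 0 ≤ q) (hqn : q + 1 ≤ n)
    (hqa : q < a) :
    a ^ q * (∏ i ∈ range n, (1 - q / (a + i))) * Gamma (a - q) ≤ Gamma a := by
  have hb : 0 < a - q := sub_pos.2 hqa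
  have hbi : ∀ i : ℕ, 0 < a - q + i := fun i => by linarith [i.cast_nonneg (α := ℝ)]
  have hai : ∀ i : ℕ, 0 < a + i := fun i => by linarith [i.cast_nonneg (α := ℝ)]
  have hprod : (∏ i ∈ range n, (1 - q / (a + i))) * ∏ i ∈ range n, (a + i) =
      ∏ i ∈ range n, (a - q + i) := by
    rw [← prod_mul_distrib]
    refine prod_congr rfl fun i _ => ?_
    field_simp [(hai i).ne']
    ring
  have hΓb := Gamma_add_nat_eq_prod_mul_s12 (x := a - q) (fun k => by linarith [hbi k]) n
  have hΓa := Gamma_add_nat_eq_prod_mul_s12 (x := a) (fun k => by linarith [hai k]) n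
  have hconv := rpow_mul_Gamma_add_one_le (x := a - q + n - 1) (s := q) (by linarith) hq
  rw [sub_add_cancel, show a - q + n + q = a + n by ring, hΓb, hΓa] at hconv
  have hpow : a ^ q ≤ (a - q + n - 1) ^ q := rpow_le_rpow (by linarith) (by linarith) hq
  have hpos : 0 < ∏ i ∈ range n, (a + i) := prod_pos fun i _ => hai i
  refine le_of_mul_le_mul_right ?_ hpos
  calc a ^ q * (∏ i ∈ range n, (1 - q / (a + i))) * Gamma (a - q) * ∏ i ∈ range n, (a + i)
      = a ^ q * ((∏ i ∈ range n, (a - q + i)) * Gamma (a - q)) := by rw [← hprod]; ring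
    _ ≤ (a - q + n - 1) ^ q * ((∏ i ∈ range n, (a - q + i)) * Gamma (a - q)) :=
        mul_le_mul_of_nonneg_right hpow
          (mul_pos (prod_pos fun i _ => hbi i) (Gamma_pos_of_pos hb)).le
    _ ≤ Gamma a * ∏ i ∈ range n, (a + i) := by linarith

theorem Real.Gamma_sub_div_Gamma_le {n : ℕ} {q m a : ℝ} (hq : 0 ≤ q) (hqn : q + 1 ≤ n)
    (hqm : q < m) (hma : m ≤ a) :
    Gamma (a - q) / Gamma a ≤ (∏ i ∈ range n, (1 - q / (m + i)))⁻¹ * a ^ (-q) := by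
  have ha : 0 < a := by linarith
  have hPm : 0 < ∏ i ∈ range n, (1 - q / (m + i)) :=
    prod_pos fun i _ => one_sub_div_add_pos hq hqm i
  have hΓ := Gamma_pos_of_pos (sub_pos.2 (hqm.trans_le hma))
  have hkey : a ^ q * (∏ i ∈ range n, (1 - q / (m + i))) * Gamma (a - q) ≤ Gamma a :=
    le_trans (mul_le_mul_of_nonneg_right (mul_le_mul_of_nonneg_left
      (prod_one_sub_div_add_le hq hqm hma n) (rpow_nonneg ha.le q)) hΓ.le)
      (rpow_mul_prod_mul_Gamma_sub_le hq hqn (hqm.trans_le hma))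
  rw [div_le_iff₀ (Gamma_pos_of_pos ha), rpow_neg ha.le, ← mul_inv, mul_comm,
    ← div_eq_mul_inv, le_div_iff₀ (by positivity)]
  linarith

theorem statement12
    (p m : ℝ) (hp : 1 ≤ p) (hm : 4 / p < m)
    (Mp : ℝ) (hMp : Mp⁻¹ = ∏ i ∈ Finset.range 5, (1 - 4 / (p * (m + i)))) :
    0 < Mp ∧ ∀ a : ℝ, m ≤ a →
      Real.Gamma (a - 4 / p) / Real.Gamma a ≤ Mp * a ^ (-(4 / p)) := by
  have hq : 0 ≤ 4 / p := by positivity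
  have hq5 : 4 / p + 1 ≤ ((5 : ℕ) : ℝ) := by
    have : 4 / p ≤ 4 := div_le_self (by norm_num) hp
    push_cast
    linarith
  simp only [← div_div] at hMp
  rw [← inv_inv Mp, hMp]
  exact ⟨inv_pos.2 (prod_pos fun i _ => one_sub_div_add_pos hq hm i),
    fun a ha => Gamma_sub_div_Gamma_le hq hq5 hm ha⟩

end
end
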